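/- arXiv:2204.13831 — 5 statements merged into one kernel-verified Lean document; each statement's English description precedes it below -/
import Mathlib

section
/- Let n = 2m be even and let q be an integer with 1 ≤ q ≤ m. Suppose x ∈ {0,1}^n is bad, i.e., T(x,q) = ∅ and T(x̄,q) = ∅. Let x' = x₁…x_{n−2q} be the prefix of x of length n − 2q. Then either T(x'0^{2q}, q) ≠ ∅ or T(x'1^{2q}, q) ≠ ∅, where x'0^{2q} (resp. x'1^{2q}) denotes x' followed by 2q zeros (resp. 2q ones). -/
/-! The walk `j ↦ wt (Flip x j)` moves by `±1` and its ends sum to `n`, so a walk avoiding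
`m + q` stays below it. Let `k = n - 2q`. Padding the prefix `x'` with zeros or with ones only
shifts the walk on `[0, k]`, and the two padded walks differ there by exactly `2q`. Past `k` the
walk of `x'0^{2q}` climbs one step at a time, so if it is at height `≥ m - q` at `k` it reaches
`m + q` before `n`. Otherwise its ends at `0` and `k` sum to `k = 2(m - q)`, so it crosses `m - q`
inside `[0, k]`, and at that point the walk of `x'1^{2q}` is at `m + q`. -/

/-- The Hamming weight of a binary word `x ∈ {0,1}^N`: the number of ones. -/
def wt {N : ℕ} (x : Fin N → Bool) : ℕ :=
  (Finset.univ.filter (fun i => x i = true)).card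

/-- `Flip x j` complements the first `j` bits of `x`. -/
def Flip {N : ℕ} (x : Fin N → Bool) (j : ℕ) : Fin N → Bool :=
  fun i => if (i : ℕ) < j then !(x i) else x i

lemma Int.exists_eq_of_le_of_le_of_succ_le {f : ℕ → ℤ} (hf : ∀ j, f (j + 1) ≤ f j + 1)
    {a b : ℕ} {c : ℤ} (hab : a ≤ b) (ha : f a ≤ c) (hb : c ≤ f b) :
    ∃ j ∈ Set.Icc a b, f j = c := by
  induction b, hab using Nat.le_induction with
  | base => exact ⟨a, ⟨le_rfl, le_rfl⟩, le_antisymm ha hb⟩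
  | succ b hab ih =>
    rcases lt_or_ge c (f (b + 1)) with hlt | hge
    · obtain ⟨j, ⟨haj, hjb⟩, hj⟩ := ih (by linarith [hf b])
      exact ⟨j, ⟨haj, hjb.trans b.le_succ⟩, hj⟩
    · exact ⟨b + 1, ⟨hab.trans b.le_succ, le_rfl⟩, le_antisymm hge hb⟩

lemma Int.exists_eq_of_mem_uIcc {f : ℕ → ℤ} (hf : ∀ j, |f (j + 1) - f j| ≤ 1)
    {a b : ℕ} {c : ℤ} (hab : a ≤ b) (hc : c ∈ Set.uIcc (f a) (f b)) :
    ∃ j ∈ Set.Icc a b, f j = c := by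
  rcases Set.mem_uIcc.1 hc with ⟨ha, hb⟩ | ⟨hb, ha⟩
  · exact Int.exists_eq_of_le_of_le_of_succ_le (fun j => by linarith [(abs_le.1 (hf j)).2])
      hab ha hb
  · obtain ⟨j, hj, hfj⟩ := Int.exists_eq_of_le_of_le_of_succ_le (f := fun j => -f j)
      (fun j => by linarith [(abs_le.1 (hf j)).1]) hab (neg_le_neg ha) (neg_le_neg hb)
    exact ⟨j, hj, neg_inj.1 hfj⟩

section Words

variable {N : ℕ}

@[simp] lemma Flip_zero (x : Fin N → Bool) : Flip x 0 = x := by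
  funext i; simp [Flip]

lemma Flip_of_le (x : Fin N → Bool) {j : ℕ} (hj : N ≤ j) : Flip x j = fun i => !x i := by
  funext i; simp [Flip, i.isLt.trans_le hj]

lemma wt_mono {x y : Fin N → Bool} (h : ∀ i, x i = true → y i = true) : wt x ≤ wt y :=
  Finset.card_le_card (Finset.monotone_filter_right _ fun i _ => h i)

lemma wt_add_wt_Flip_of_le (x : Fin N → Bool) {j : ℕ} (hj : N ≤ j) :
    wt x + wt (Flip x j) = N := by
  simpa [wt, Flip_of_le x hj] using
    Finset.card_filter_add_card_filter_not (s := Finset.univ) (fun i : Fin N => x i = true)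

lemma wt_Flip_succ (x : Fin N → Bool) {j : ℕ} (hj : j < N) :
    (wt (Flip x (j + 1)) : ℤ) = wt (Flip x j) + if x ⟨j, hj⟩ then -1 else 1 := by
  rw [← sub_eq_iff_eq_add', wt, wt, Finset.natCast_card_filter, Finset.natCast_card_filter,
    ← Finset.sum_sub_distrib, Finset.sum_eq_single_of_mem ⟨j, hj⟩ (Finset.mem_univ _)]
  · cases hx : x ⟨j, hj⟩ <;> simp [Flip, hx]
  · intro i _ hi
    have : (i : ℕ) ≠ j := fun h => hi (Fin.ext h)
    simp only [Flip, show (i : ℕ) < j + 1 ↔ (i : ℕ) < j by omega]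
    exact sub_self _

lemma abs_wt_Flip_succ_sub_le (x : Fin N → Bool) (j : ℕ) :
    |(wt (Flip x (j + 1)) : ℤ) - wt (Flip x j)| ≤ 1 := by
  by_cases hj : j < N
  · rw [wt_Flip_succ x hj]; split <;> simp
  · rw [Flip_of_le x (by omega : N ≤ j + 1), Flip_of_le x (by omega : N ≤ j)]; simp

lemma wt_Flip_add_of_forall_eq (x : Fin N → Bool) (b : Bool) {k t : ℕ} (hkt : k + t ≤ N)
    (hx : ∀ i : Fin N, k ≤ i → (i : ℕ) < k + t → x i = b) :
    (wt (Flip x (k + t)) : ℤ) = wt (Flip x k) + if b then -(t : ℤ) else t := by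
  induction t with
  | zero => simp
  | succ t ih =>
    rw [← add_assoc, wt_Flip_succ x (by omega),
      ih (by omega) fun i hki hik => hx i hki (by omega), hx _ (by simp) (by simp)]
    cases b <;> simp <;> ring

lemma wt_Flip_sub_wt_eq_of_eqOn {x y : Fin N → Bool} {k : ℕ}
    (hxy : ∀ i : Fin N, (i : ℕ) < k → x i = y i) {j : ℕ} (hj : j ≤ k) :
    (wt (Flip x j) : ℤ) - wt x = wt (Flip y j) - wt y := by
  induction j with
  | zero => simp
  | succ j ih =>
    by_cases hjN : j < N
    · rw [wt_Flip_succ x hjN, wt_Flip_succ y hjN, hxy _ (by simp; omega)]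
      linarith [ih (by omega)]
    · rw [Flip_of_le x (by omega : N ≤ j + 1), Flip_of_le y (by omega : N ≤ j + 1),
        ← Flip_of_le x (by omega : N ≤ j), ← Flip_of_le y (by omega : N ≤ j)]
      exact ih (by omega)

lemma wt_Flip_lt_of_forall_ne (x : Fin N → Bool) {c : ℕ} (hc : N ≤ 2 * c)
    (hx : ∀ j ≤ N, wt (Flip x j) ≠ c) {j : ℕ} (hj : j ≤ N) : wt (Flip x j) < c := by
  by_contra! hge
  have hends := wt_add_wt_Flip_of_le x le_rfl
  rcases le_total (wt x) c with h0 | h0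
  · obtain ⟨i, hi, hic⟩ := Int.exists_eq_of_mem_uIcc (f := fun j => (wt (Flip x j) : ℤ)) (c := c)
      (abs_wt_Flip_succ_sub_le x) (Nat.zero_le j)
      (Set.mem_uIcc.2 (Or.inl ⟨by simpa using h0, by exact_mod_cast hge⟩))
    exact hx i (hi.2.trans hj) (by exact_mod_cast hic)
  · obtain ⟨i, hi, hic⟩ := Int.exists_eq_of_mem_uIcc (f := fun j => (wt (Flip x j) : ℤ)) (c := c)
      (abs_wt_Flip_succ_sub_le x) hj (Set.mem_uIcc.2 (Or.inr ⟨by omega, by exact_mod_cast hge⟩))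
    exact hx i hi.2 (by exact_mod_cast hic)

-- `pad x k b` is the word `x₁…x_k b^{N-k}`.
def pad (x : Fin N → Bool) (k : ℕ) (b : Bool) : Fin N → Bool :=
  fun i => if (i : ℕ) < k then x i else b

variable (x : Fin N → Bool) {k : ℕ}

lemma wt_Flip_pad_add (b : Bool) {t : ℕ} (hkt : k + t ≤ N) :
    (wt (Flip (pad x k b) (k + t)) : ℤ) = wt (Flip (pad x k b) k) + if b then -(t : ℤ) else t :=
  wt_Flip_add_of_forall_eq _ b hkt fun i hki _ => by simp [pad, not_lt.2 hki]

lemma wt_pad_false_add_wt_Flip (hk : k ≤ N) :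
    (wt (pad x k false) : ℤ) + wt (Flip (pad x k false) k) = k := by
  have hends : (wt (pad x k false) : ℤ) + wt (Flip (pad x k false) N) = N := by
    exact_mod_cast wt_add_wt_Flip_of_le _ le_rfl
  have htail := wt_Flip_pad_add x false (k := k) (t := N - k) (by omega)
  rw [Nat.add_sub_cancel' hk, if_neg Bool.false_ne_true] at htail
  push_cast [Nat.cast_sub hk] at htail
  linarith

lemma wt_Flip_pad_true (hk : k ≤ N) {j : ℕ} (hj : j ≤ k) :
    (wt (Flip (pad x k true) j) : ℤ) = wt (Flip (pad x k false) j) + (N - k) := by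
  have hpre : ∀ i : Fin N, (i : ℕ) < k → pad x k true i = pad x k false i := by
    intro i hi; simp [pad, hi]
  have hends : (wt (pad x k true) : ℤ) + wt (Flip (pad x k true) N) = N := by
    exact_mod_cast wt_add_wt_Flip_of_le _ le_rfl
  have htail := wt_Flip_pad_add x true (k := k) (t := N - k) (by omega)
  rw [Nat.add_sub_cancel' hk, if_pos rfl] at htail
  push_cast [Nat.cast_sub hk] at htail
  -- the two walks differ by a constant on `[0, k]`, read off from their ends at `0` and `N`
  linarith [wt_Flip_sub_wt_eq_of_eqOn hpre hj, wt_Flip_sub_wt_eq_of_eqOn hpre le_rfl,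
    wt_pad_false_add_wt_Flip x hk]

lemma wt_Flip_pad_false_le {j : ℕ} (hj : j ≤ k) :
    wt (Flip (pad x k false) j) ≤ wt (Flip x j) := by
  have hpre : ∀ i : Fin N, (i : ℕ) < k → pad x k false i = x i := by
    intro i hi; simp [pad, hi]
  have hwt : wt (pad x k false) ≤ wt x := wt_mono fun i => by unfold pad; split <;> simp_all
  have := wt_Flip_sub_wt_eq_of_eqOn hpre hj
  omega

end Words

theorem stmt1_general (m q : ℕ) (hqm : q ≤ m) (x : Fin (2*m) → Bool)
    (hbad1 : ∀ j ≤ 2*m, wt (Flip x j) ≠ m + q) :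
    (∃ j ≤ 2*m,
      wt (Flip (fun i : Fin (2*m) => if (i : ℕ) < 2*m - 2*q then x i else false) j) = m + q) ∨
    (∃ j ≤ 2*m,
      wt (Flip (fun i : Fin (2*m) => if (i : ℕ) < 2*m - 2*q then x i else true) j) = m + q) := by
  change (∃ j ≤ 2*m, wt (Flip (pad x (2*m - 2*q) false) j) = m + q) ∨
    (∃ j ≤ 2*m, wt (Flip (pad x (2*m - 2*q) true) j) = m + q)
  set k := 2*m - 2*q
  have hk : k ≤ 2*m := Nat.sub_le _ _
  have hxk : wt (Flip x k) < m + q := wt_Flip_lt_of_forall_ne x (by omega) hbad1 hk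
  have hyk : wt (Flip (pad x k false) k) ≤ wt (Flip x k) := wt_Flip_pad_false_le x le_rfl
  by_cases hcase : m - q ≤ wt (Flip (pad x k false) k)
  · left
    set t := m + q - wt (Flip (pad x k false) k)
    refine ⟨k + t, by omega, ?_⟩
    have htail := wt_Flip_pad_add x false (k := k) (t := t) (by omega)
    rw [if_neg Bool.false_ne_true] at htail
    omega
  · right
    have hends := wt_pad_false_add_wt_Flip x hk
    obtain ⟨j, hj, hgj⟩ := Int.exists_eq_of_mem_uIcc
      (f := fun j => (wt (Flip (pad x k false) j) : ℤ)) (abs_wt_Flip_succ_sub_le _) (Nat.zero_le k)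
      (c := m - q) (Set.mem_uIcc.2 (Or.inr ⟨by omega, by simp only [Flip_zero]; omega⟩))
    refine ⟨j, hj.2.trans hk, ?_⟩
    have := wt_Flip_pad_true x hk hj.2
    omega

/-- if `x ∈ {0,1}^n` is bad (`T(x,q) = ∅` and `T(x̄,q) = ∅`), then,
with `x'` the prefix of `x` of length `n − 2q`, either `T(x'0^{2q}, q) ≠ ∅`
or `T(x'1^{2q}, q) ≠ ∅`. -/
theorem stmt1 (m q : ℕ) (hq1 : 1 ≤ q) (hqm : q ≤ m) (x : Fin (2*m) → Bool)
    (hbad1 : ∀ j ≤ 2*m, wt (Flip x j) ≠ m + q)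
    (hbad2 : ∀ j ≤ 2*m, wt (Flip (fun i => !(x i)) j) ≠ m + q) :
    (∃ j ≤ 2*m,
      wt (Flip (fun i : Fin (2*m) => if (i : ℕ) < 2*m - 2*q then x i else false) j) = m + q) ∨
    (∃ j ≤ 2*m,
      wt (Flip (fun i : Fin (2*m) => if (i : ℕ) < 2*m - 2*q then x i else true) j) = m + q) :=
  stmt1_general m q hqm x hbad1
end

section
/- Let n = 2m be even and let q be an integer with 1 ≤ q ≤ m. Then the number D(n,q) of bad words in {0,1}^n satisfies D(n,q) = Σ_{y=1−q}^{q−1} Σ_{k=1}^{q−1} (2/q) · (2 cos(πk/(2q)))^{2m} · sin(πk(q−y)/(2q)) · sin(πk(q+y)/(2q)). -/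
/-- `x ∈ {0,1}^{2m}` is bad if `T(x,q) = ∅` and `T(x̄,q) = ∅`. -/
def Bad (m q : ℕ) (x : Fin (2*m) → Bool) : Prop :=
  (∀ j ≤ 2*m, wt (Flip x j) ≠ m + q) ∧
  (∀ j ≤ 2*m, wt (Flip (fun i => !(x i)) j) ≠ m + q)

/-- `D m q` is the number of bad words in `{0,1}^{2m}`. -/
noncomputable def D (m q : ℕ) : ℕ := Nat.card {x : Fin (2*m) → Bool // Bad m q x}

open Finset Real

def step (b : Bool) : ℤ := if b then -1 else 1

def walk {n : ℕ} (x : Fin n → Bool) (j : ℕ) : ℤ :=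
  ∑ i : Fin n, if (i : ℕ) < j then step (x i) else 0

@[simp] lemma walk_zero {n : ℕ} (x : Fin n → Bool) : walk x 0 = 0 := by
  simp [walk]

lemma walk_cons {n : ℕ} (c : Bool) (y : Fin n → Bool) (j : ℕ) :
    walk (Fin.cons c y : Fin (n + 1) → Bool) (j + 1) = step c + walk y j := by
  simp [walk, Fin.sum_univ_succ]

lemma abs_walk_succ_sub_le {n : ℕ} (x : Fin n → Bool) (j : ℕ) :
    |walk x (j + 1) - walk x j| ≤ 1 := by
  induction n generalizing j with
  | zero => simp [walk]
  | succ n ih =>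
    obtain ⟨c, y, rfl⟩ : ∃ c y, x = Fin.cons c y := ⟨x 0, Fin.tail x, (Fin.cons_self_tail x).symm⟩
    cases j with
    | zero => cases c <;> simp [walk_cons, step]
    | succ j => simpa [walk_cons] using ih y j

lemma wt_eq_sum {N : ℕ} (x : Fin N → Bool) : (wt x : ℤ) = ∑ i, if x i then 1 else 0 := by
  rw [wt, card_filter]
  push_cast
  rfl

lemma wt_Flip {N : ℕ} (x : Fin N → Bool) (j : ℕ) : (wt (Flip x j) : ℤ) = wt x + walk x j := by
  rw [wt_eq_sum, wt_eq_sum, walk, ← sum_add_distrib]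
  refine sum_congr rfl fun i _ => ?_
  by_cases hij : (i : ℕ) < j <;> cases h : x i <;> simp [Flip, hij, step, h]

lemma wt_not {N : ℕ} (x : Fin N → Bool) : (wt (fun i => !x i) : ℤ) = N - wt x := by
  have := card_filter_add_card_filter_not (s := univ) (fun i => x i = true)
  simp only [card_univ, Fintype.card_fin, Bool.not_eq_true] at this
  simp only [wt, Bool.not_eq_true']
  omega

lemma Flip_not {N : ℕ} (x : Fin N → Bool) (j : ℕ) :
    Flip (fun i => !x i) j = fun i => !Flip x j i := by
  funext i
  unfold Flip
  split <;> rfl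

lemma walk_self {N : ℕ} (x : Fin N → Bool) : walk x N = N - 2 * wt x := by
  have hFlip : Flip x N = fun i => !x i := funext fun i => if_pos i.isLt
  have := wt_Flip x N
  rw [hFlip, wt_not] at this
  linarith

lemma lt_iff_lt_of_unit_steps_of_forall_ne {f : ℕ → ℤ} (hf : ∀ j, |f (j + 1) - f j| ≤ 1)
    {c : ℤ} {n : ℕ} (hc : ∀ j ≤ n, f j ≠ c) : ∀ j ≤ n, (f j < c ↔ f 0 < c) := by
  intro j hj
  induction j with
  | zero => rfl
  | succ j ih =>
    have hstep := abs_le.mp (hf j)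
    have := hc j (by omega)
    have := hc (j + 1) hj
    rw [← ih (by omega)]
    omega

def IsConfinedWalk (L : ℕ) (u v : ℤ) {n : ℕ} (x : Fin n → Bool) : Prop :=
  (∀ j ≤ n, 0 < u + walk x j ∧ u + walk x j < L) ∧ u + walk x n = v

theorem bad_iff_isConfinedWalk (m q : ℕ) (x : Fin (2 * m) → Bool) :
    Bad m q x ↔ IsConfinedWalk (2 * q) (q - (m - wt x)) (q + (m - wt x)) x := by
  set P : ℕ → ℤ := fun j => q - (m - wt x) + walk x j with hP
  have hP_step (j : ℕ) : |P (j + 1) - P j| ≤ 1 := by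
    simpa [hP] using abs_walk_succ_sub_le x j
  have hP_end : P (2 * m) = q + (m - wt x) := by
    simp only [hP, walk_self]
    push_cast
    ring
  have hwt (j : ℕ) : (wt (Flip x j) : ℤ) = P j + m - q := by
    rw [wt_Flip]
    ring
  have hwt_not (j : ℕ) : (wt (Flip (fun i => !x i) j) : ℤ) = m + q - P j := by
    rw [Flip_not, wt_not, wt_Flip]
    push_cast
    ring
  unfold Bad IsConfinedWalk
  constructor
  · rintro ⟨hx, hx_not⟩
    have hne : ∀ j ≤ 2 * m, P j ≠ 0 ∧ P j ≠ 2 * q := fun j hj => by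
      have h1 := hwt j
      have h2 := hwt_not j
      have := hx j hj
      have := hx_not j hj
      omega
    -- `P` ends at `2q - P 0`, so it could only start outside `(0, 2q)` by crossing `0` or `2q`.
    have hside0 := lt_iff_lt_of_unit_steps_of_forall_ne hP_step (fun j hj => (hne j hj).1)
    have hside2q := lt_iff_lt_of_unit_steps_of_forall_ne hP_step (fun j hj => (hne j hj).2)
    have h0 := hne 0 (Nat.zero_le _)
    have hend0 := hside0 _ le_rfl
    have hend2q := hside2q _ le_rfl
    refine ⟨fun j hj => ?_, hP_end⟩
    have := hne j hj
    have := hside0 j hj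
    have := hside2q j hj
    simp only [hP, walk_zero, add_zero] at *
    omega
  · rintro ⟨hx, -⟩
    refine ⟨fun j hj => ?_, fun j hj => ?_⟩ <;>
    · have := hx j hj
      have := hwt j
      have := hwt_not j
      simp only [hP] at *
      omega

noncomputable def confinedWalkCount (L n : ℕ) (u v : ℤ) : ℕ :=
  Nat.card {x : Fin n → Bool // IsConfinedWalk L u v x}

lemma isConfinedWalk_cons_iff {L n : ℕ} {u v : ℤ} (c : Bool) (y : Fin n → Bool) :
    IsConfinedWalk L u v (Fin.cons c y : Fin (n + 1) → Bool) ↔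
      (0 < u ∧ u < L) ∧ IsConfinedWalk L (u + step c) v y := by
  simp only [IsConfinedWalk, ← Nat.lt_succ_iff, Nat.forall_lt_succ_left, walk_zero, walk_cons,
    add_zero, add_assoc]
  tauto

lemma confinedWalkCount_eq_zero {L n : ℕ} {u : ℤ} (v : ℤ) (hu : ¬ (0 < u ∧ u < L)) :
    confinedWalkCount L n u v = 0 := by
  rw [confinedWalkCount, Nat.card_eq_zero]
  exact .inl ⟨fun x => hu (by simpa using x.2.1 0 (Nat.zero_le _))⟩

lemma confinedWalkCount_zero {L : ℕ} {u : ℤ} (v : ℤ) (hu : 0 < u ∧ u < L) :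
    confinedWalkCount L 0 u v = if u = v then 1 else 0 := by
  have : ∀ x : Fin 0 → Bool, IsConfinedWalk L u v x ↔ u = v := fun x => by
    simp [IsConfinedWalk, hu]
  simp only [confinedWalkCount, this]
  split_ifs with h <;> simp [h]

lemma confinedWalkCount_succ {L n : ℕ} {u : ℤ} (v : ℤ) (hu : 0 < u ∧ u < L) :
    confinedWalkCount L (n + 1) u v =
      confinedWalkCount L n (u + 1) v + confinedWalkCount L n (u - 1) v := by
  let e : {x : Fin (n + 1) → Bool // IsConfinedWalk L u v x} ≃
      Σ c : Bool, {y : Fin n → Bool // IsConfinedWalk L (u + step c) v y} :=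
    ((Fin.consEquiv fun _ => Bool).subtypeEquiv
      (p := fun p => IsConfinedWalk L (u + step p.1) v p.2) (q := IsConfinedWalk L u v)
      fun p => ((isConfinedWalk_cons_iff p.1 p.2).trans (and_iff_right hu)).symm).symm.trans
      (Equiv.subtypeProdEquivSigmaSubtype fun c y => IsConfinedWalk L (u + step c) v y)
  rw [confinedWalkCount, Nat.card_congr e, Nat.card_sigma, Fintype.sum_bool, add_comm]
  simp [confinedWalkCount, step, sub_eq_add_neg]

theorem D_eq_sum_confinedWalkCount (m q : ℕ) :
    D m q = ∑ y ∈ Icc (1 - (q : ℤ)) (q - 1), confinedWalkCount (2 * q) (2 * m) (q - y) (q + y) := by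
  classical
  have hmaps : Set.MapsTo (fun x : Fin (2 * m) → Bool => (m : ℤ) - wt x)
      (univ.filter (Bad m q)) (Icc (1 - (q : ℤ)) (q - 1)) := fun x hx => by
    have := ((bad_iff_isConfinedWalk m q x).1 (mem_filter.1 hx).2).1 0 (Nat.zero_le _)
    simp only [walk_zero, add_zero] at this
    simp only [coe_Icc, Set.mem_Icc]
    omega
  rw [D, Nat.card_eq_fintype_card, Fintype.card_subtype, card_eq_sum_card_fiberwise hmaps]
  refine sum_congr rfl fun y _ => ?_
  rw [confinedWalkCount, Nat.card_eq_fintype_card, Fintype.card_subtype, filter_filter]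
  congr 1
  ext x
  simp only [mem_filter, mem_univ, true_and, bad_iff_isConfinedWalk]
  constructor
  · rintro ⟨hx, rfl⟩
    exact hx
  · intro hx
    have hy : (m : ℤ) - wt x = y := by
      have := hx.2
      rw [walk_self] at this
      push_cast at this
      omega
    exact ⟨hy ▸ hx, hy⟩

lemma sum_range_two_mul_add_eq_of_symm {M : Type*} [AddCommMonoid M] (f : ℕ → M) (N : ℕ)
    (hf : ∀ k ≤ N, f (2 * N - k) = f k) :
    ∑ k ∈ range (2 * N), f k + f 0 = 2 • ∑ k ∈ range N, f k + f N := by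
  have hupper : ∑ k ∈ range (N + 1), f (N + k) = ∑ k ∈ range (N + 1), f k := by
    rw [← sum_range_reflect]
    refine sum_congr rfl fun k hk => ?_
    rw [mem_range] at hk
    rw [← hf k (by omega)]
    congr 1
    omega
  calc ∑ k ∈ range (2 * N), f k + f 0
      = ∑ k ∈ range (2 * N + 1), f k := by
        rw [sum_range_succ, ← hf 0 (Nat.zero_le _), Nat.sub_zero]
    _ = ∑ k ∈ range N, f k + ∑ k ∈ range (N + 1), f (N + k) := by
        rw [← sum_range_add]
        ring_nf
    _ = 2 • ∑ k ∈ range N, f k + f N := by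
        rw [hupper, sum_range_succ, two_nsmul, add_assoc]

noncomputable def sineMode (L n : ℕ) (u v : ℤ) (s : ℝ) : ℝ :=
  (2 * cos (π * s / L)) ^ n * sin (π * s * u / L) * sin (π * s * v / L)

lemma sineMode_succ (L n : ℕ) (u v : ℤ) (s : ℝ) :
    sineMode L (n + 1) u v s = sineMode L n (u + 1) v s + sineMode L n (u - 1) v s := by
  have h := two_mul_sin_mul_cos (π * s * u / L) (π * s / L)
  simp only [sineMode, pow_succ]
  push_cast
  rw [show π * s * (u + 1) / L = π * s * u / L + π * s / L by ring,
    show π * s * (u - 1) / L = π * s * u / L - π * s / L by ring]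
  linear_combination (2 * cos (π * s / L)) ^ n * sin (π * s * v / L) * h

lemma sineMode_zero_left (L n : ℕ) (v : ℤ) (s : ℝ) : sineMode L n 0 v s = 0 := by
  simp [sineMode]

lemma sineMode_self_left (L n : ℕ) (v : ℤ) (k : ℕ) (hL : L ≠ 0) : sineMode L n L v k = 0 := by
  have : π * k * L / L = k * π := by
    field_simp
  rw [sineMode, Int.cast_natCast, this, sin_nat_mul_pi, mul_zero, zero_mul]

lemma sineMode_zero_arg (L n : ℕ) (u v : ℤ) : sineMode L n u v 0 = 0 := by
  simp [sineMode]

lemma sineMode_self_arg (L n : ℕ) (u v : ℤ) (hL : L ≠ 0) : sineMode L n u v L = 0 := by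
  have : π * L * u / L = u * π := by
    field_simp
  simp [sineMode, this, sin_int_mul_pi]

lemma sineMode_two_mul_sub (L n : ℕ) (u v : ℤ) (s : ℝ) (hL : L ≠ 0) :
    sineMode L n u v (2 * L - s) = sineMode L n u v s := by
  have hsin (w : ℤ) : sin (π * (2 * L - s) * w / L) = -sin (π * s * w / L) := by
    rw [← sin_int_mul_two_pi_sub _ w]
    congr 1
    field_simp
  have hcos : cos (π * (2 * L - s) / L) = cos (π * s / L) := by
    rw [← cos_two_pi_sub]
    congr 1
    field_simp
    ring
  simp only [sineMode, hsin, hcos]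
  ring

lemma sineMode_sub (L n : ℕ) (u v : ℤ) (s : ℝ) (hL : L ≠ 0) (hn : Even n) (huv : Even (u + v)) :
    sineMode L n u v (L - s) = sineMode L n u v s := by
  have hsin (w : ℤ) : sin (π * (L - s) * w / L) = -((-1) ^ w * sin (π * s * w / L)) := by
    rw [← sin_int_mul_pi_sub _ w]
    congr 1
    field_simp
  have hcos : cos (π * (L - s) / L) = -cos (π * s / L) := by
    rw [← cos_pi_sub]
    congr 1
    field_simp
  have hsign : ((-1 : ℝ) ^ u) * (-1) ^ v = 1 := by
    rw [← zpow_add₀ (by norm_num), huv.neg_one_zpow]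
  simp only [sineMode, hsin, hcos, mul_neg, neg_mul, hn.neg_pow]
  linear_combination (2 * cos (π * s / L)) ^ n * sin (π * s * u / L) * sin (π * s * v / L) * hsign

lemma sum_range_two_mul_sineMode (L n : ℕ) (u v : ℤ) (hL : L ≠ 0) :
    ∑ k ∈ range (2 * L), sineMode L n u v k = 2 * ∑ k ∈ range L, sineMode L n u v k := by
  have := sum_range_two_mul_add_eq_of_symm (fun k : ℕ => sineMode L n u v k) L fun k hk => by
    rw [Nat.cast_sub (by omega), Nat.cast_mul, Nat.cast_two, sineMode_two_mul_sub _ _ _ _ _ hL]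
  simpa [sineMode_zero_arg, sineMode_self_arg _ _ _ _ hL] using this

lemma sum_range_sineMode_of_even (q n : ℕ) (u v : ℤ) (hq : q ≠ 0) (hn : Even n) (hn0 : n ≠ 0)
    (huv : Even (u + v)) :
    ∑ k ∈ range (2 * q), sineMode (2 * q) n u v k =
      2 * ∑ k ∈ range q, sineMode (2 * q) n u v k := by
  have hmid : sineMode (2 * q) n u v q = 0 := by
    have : π * q / ((2 * q : ℕ) : ℝ) = π / 2 := by
      push_cast
      field_simp
    rw [sineMode, this, cos_pi_div_two, mul_zero, zero_pow hn0, zero_mul, zero_mul]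
  have := sum_range_two_mul_add_eq_of_symm (fun k : ℕ => sineMode (2 * q) n u v k) q fun k hk => by
    rw [Nat.cast_sub (by omega), sineMode_sub _ _ _ _ _ (by omega) hn huv]
  simpa [sineMode_zero_arg, hmid] using this

lemma sum_range_cos_eq_zero (L : ℕ) {d : ℤ} (hd : ¬ (2 * L : ℤ) ∣ d) :
    ∑ k ∈ range (2 * L), cos (π * k * d / L) = 0 := by
  rcases Nat.eq_zero_or_pos L with rfl | hL
  · simp
  have hperiod (c : ℤ) : π * d / L ≠ c * (2 * π) := fun h => hd ⟨c, by
    field_simp at h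
    exact_mod_cast (show (d : ℝ) = 2 * L * c by linarith)⟩
  have := Real.sum_cos (2 * L) hperiod 0
  have hsin : sin ((2 * L : ℕ) * (π * d / L) / 2) = 0 := by
    rw [← sin_int_mul_pi d]
    congr 1
    push_cast
    field_simp
  simp only [add_zero, hsin, zero_mul, zero_div] at this
  rw [← this]
  refine sum_congr rfl fun k _ => ?_
  ring_nf

lemma sum_range_sin_mul_sin (L : ℕ) {u v : ℤ} (hu : 0 < u ∧ u < L) (hv : 0 < v ∧ v < L) :
    ∑ k ∈ range L, sin (π * k * u / L) * sin (π * k * v / L) =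
      if u = v then (L : ℝ) / 2 else 0 := by
  have hL : L ≠ 0 := by omega
  have hprod (k : ℕ) : sin (π * k * u / L) * sin (π * k * v / L) =
      (cos (π * k * (u - v : ℤ) / L) - cos (π * k * (u + v : ℤ) / L)) / 2 := by
    rw [show π * k * ((u - v : ℤ) : ℝ) / L = π * k * u / L - π * k * v / L by push_cast; ring,
      show π * k * ((u + v : ℤ) : ℝ) / L = π * k * u / L + π * k * v / L by push_cast; ring,
      ← two_mul_sin_mul_sin]
    ring
  have hfull : 2 * ∑ k ∈ range L, sin (π * k * u / L) * sin (π * k * v / L) =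
      (∑ k ∈ range (2 * L), cos (π * k * (u - v : ℤ) / L) -
        ∑ k ∈ range (2 * L), cos (π * k * (u + v : ℤ) / L)) / 2 := by
    have := sum_range_two_mul_sineMode L 0 u v hL
    simp only [sineMode, pow_zero, one_mul] at this
    rw [← this, ← sum_sub_distrib, sum_div]
    exact sum_congr rfl fun k _ => hprod k
  have hnot_dvd (d : ℤ) (hd0 : d ≠ 0) (hd : |d| < 2 * L) : ¬ (2 * L : ℤ) ∣ d :=
    fun h => hd0 (Int.eq_zero_of_abs_lt_dvd h hd)
  rw [sum_range_cos_eq_zero L (hnot_dvd (u + v) (by omega) (by rw [abs_lt]; omega))] at hfull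
  split_ifs with huv
  · subst huv
    simp only [sub_self, Int.cast_zero, mul_zero, zero_div, cos_zero, sum_const, card_range,
      nsmul_eq_mul, mul_one] at hfull
    push_cast at hfull
    linarith
  · rw [sum_range_cos_eq_zero L (hnot_dvd (u - v) (by omega) (by rw [abs_lt]; omega))] at hfull
    linarith

lemma sum_range_sineMode_of_boundary (L n : ℕ) {u : ℤ} (v : ℤ) (hL : L ≠ 0)
    (hu : u = 0 ∨ u = L) : ∑ k ∈ range L, sineMode L n u v k = 0 := by
  rcases hu with rfl | rfl
  · simp [sineMode_zero_left]
  · simp [sineMode_self_left _ _ _ _ hL]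

theorem confinedWalkCount_eq_sum_sineMode (L n : ℕ) {u v : ℤ} (hu : 0 ≤ u ∧ u ≤ L)
    (hv : 0 < v ∧ v < L) :
    (confinedWalkCount L n u v : ℝ) = 2 / L * ∑ k ∈ range L, sineMode L n u v k := by
  have hL : L ≠ 0 := by omega
  induction n generalizing u with
  | zero =>
    by_cases hu' : 0 < u ∧ u < L
    · simp only [confinedWalkCount_zero v hu', sineMode, pow_zero, one_mul,
        sum_range_sin_mul_sin L hu' hv]
      split_ifs <;> field_simp <;> simp
    · rw [confinedWalkCount_eq_zero v hu', sum_range_sineMode_of_boundary L 0 v hL (by omega)]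
      simp
  | succ n ih =>
    by_cases hu' : 0 < u ∧ u < L
    · rw [confinedWalkCount_succ v hu', Nat.cast_add, ih (by omega), ih (by omega), ← mul_add,
        ← sum_add_distrib]
      simp only [sineMode_succ]
    · rw [confinedWalkCount_eq_zero v hu', sum_range_sineMode_of_boundary L _ v hL (by omega)]
      simp

/-- exact trigonometric formula for the number of bad words. -/
theorem stmt2 (m q : ℕ) (hq1 : 1 ≤ q) (hqm : q ≤ m) :
    (D m q : ℝ) =
      ∑ y ∈ Finset.Icc (1 - (q : ℤ)) ((q : ℤ) - 1), ∑ k ∈ Finset.Icc 1 (q - 1),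
        (2 / (q : ℝ)) * (2 * Real.cos (Real.pi * (k : ℝ) / (2*q)))^(2*m)
          * Real.sin (Real.pi * (k : ℝ) * ((q : ℝ) - (y : ℝ)) / (2*q))
          * Real.sin (Real.pi * (k : ℝ) * ((q : ℝ) + (y : ℝ)) / (2*q)) := by
  rw [D_eq_sum_confinedWalkCount, Nat.cast_sum]
  refine sum_congr rfl fun y hy => ?_
  rw [mem_Icc] at hy
  have hdrop : ∑ k ∈ range q, sineMode (2 * q) (2 * m) (q - y) (q + y) k =
      ∑ k ∈ Icc 1 (q - 1), sineMode (2 * q) (2 * m) (q - y) (q + y) k := by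
    refine (sum_subset (fun k hk => ?_) fun k hk hk' => ?_).symm
    · rw [mem_Icc] at hk
      rw [mem_range]
      omega
    · obtain rfl : k = 0 := by
        rw [mem_range] at hk
        rw [mem_Icc] at hk'
        omega
      rw [Nat.cast_zero, sineMode_zero_arg]
  rw [confinedWalkCount_eq_sum_sineMode (2 * q) (2 * m) (by omega) (by omega),
    sum_range_sineMode_of_even q (2 * m) _ _ (by omega) (even_two_mul m) (by omega) ⟨q, by ring⟩,
    hdrop, ← mul_assoc, mul_sum]
  refine sum_congr rfl fun k _ => ?_
  simp only [sineMode]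
  push_cast
  ring
end

section
/- Let n = 2m be even, let q be an integer with 0 ≤ q ≤ m, and let 1 ≤ i ≤ n. For c ∈ {0,1}^{n−1} with wt(c) ∈ {m+q−1, m+q}, one has |Γ_q^{(B)}(c)| = i if and only if either (wt(c) = m+q−1 and max_{0≤j≤n−1} R(c)_j = i−1) or (wt(c) = m+q and min_{0≤j≤n−1} R(c)_j = −(i−1)). -/
/-- The running sum `R(x)`: `R(x)₀ = 0` and `R(x)ᵢ = R(x)_{i−1} ± 1`
according to whether the `i`-th bit is `1` or `0`. -/
def RS {N : ℕ} (x : Fin N → Bool) : ℕ → ℤ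
  | 0 => 0
  | i + 1 => RS x i + if h : i < N then (if x ⟨i, h⟩ then 1 else -1) else 0

/-- `j ∈ T_B(x,q)`: `j ∈ {0,…,n−1}` and `wt(Flip(x,j)) ∈ {m+q−1, m+q}`. -/
def TBmem (m q : ℕ) (x : Fin (2*m-1) → Bool) (j : ℕ) : Prop :=
  j ≤ 2*m - 1 ∧ (wt (Flip x j) = m + q - 1 ∨ wt (Flip x j) = m + q)

/-- `Γ_q^{(B)}(c)`: the set of indices `j` such that the word `x = Flip(c,j)`
satisfies `T_B(x,q) ≠ ∅` and `min T_B(x,q) = j`. -/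
def GammaB (m q : ℕ) (c : Fin (2*m-1) → Bool) : Set ℕ :=
  {j | TBmem m q (Flip c j) j ∧ ∀ j', TBmem m q (Flip c j) j' → j ≤ j'}

lemma wt_sum {N : ℕ} (x : Fin N → Bool) :
    (wt x : ℤ) = ∑ i : Fin N, (if x i then (1:ℤ) else 0) := by
  unfold wt
  rw [Finset.card_filter]
  push_cast
  rfl

lemma RS_sum {N : ℕ} (x : Fin N → Bool) (j : ℕ) :
    RS x j = ∑ i : Fin N, (if (i:ℕ) < j then (if x i then (1:ℤ) else -1) else 0) := by
  induction j with
  | zero => simp [RS]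
  | succ j ih =>
    have hsplit : ∀ i : Fin N, (if (i:ℕ) < j+1 then (if x i then (1:ℤ) else -1) else 0)
        = (if (i:ℕ) < j then (if x i then (1:ℤ) else -1) else 0)
          + (if (i:ℕ) = j then (if x i then (1:ℤ) else -1) else 0) := by
      intro i
      rcases lt_trichotomy (i:ℕ) j with h | h | h
      · simp [h, Nat.lt_succ_of_lt h, Nat.ne_of_lt h]
      · simp [h]
      · have h1 : ¬ (i:ℕ) < j + 1 := by omega
        have h2 : ¬ (i:ℕ) < j := by omega
        have h3 : (i:ℕ) ≠ j := by omega
        simp [h1, h2, h3]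
    rw [show RS x (j+1) = RS x j + (if h : j < N then (if x ⟨j,h⟩ then (1:ℤ) else -1) else 0) from rfl, ih]
    simp only [hsplit]
    rw [Finset.sum_add_distrib]
    congr 1
    by_cases h : j < N
    · rw [Finset.sum_eq_single (⟨j, h⟩ : Fin N)]
      · simp [h]
      · intro b _ hb
        have : (b:ℕ) ≠ j := fun hbj => hb (Fin.ext hbj)
        simp [this]
      · intro habs; exact absurd (Finset.mem_univ _) habs
    · rw [Finset.sum_eq_zero, dif_neg h]
      intro i _
      have : (i:ℕ) ≠ j := by have := i.isLt; omega
      simp [this]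

lemma wt_Flip_int {N : ℕ} (x : Fin N → Bool) (j : ℕ) :
    (wt (Flip x j) : ℤ) = (wt x : ℤ) - RS x j := by
  rw [wt_sum, wt_sum, RS_sum, ← Finset.sum_sub_distrib]
  apply Finset.sum_congr rfl
  intro i _
  simp only [Flip]
  by_cases h : (i:ℕ) < j <;> by_cases hx : x i <;> simp [h, hx]

lemma RS_Flip {N : ℕ} (x : Fin N → Bool) {j j' : ℕ} (h : j' ≤ j) :
    RS (Flip x j) j' = - RS x j' := by
  rw [RS_sum, RS_sum, ← Finset.sum_neg_distrib]
  apply Finset.sum_congr rfl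
  intro i _
  by_cases hij : (i:ℕ) < j'
  · have hj : (i:ℕ) < j := lt_of_lt_of_le hij h
    simp only [Flip, if_pos hij, if_pos hj]
    by_cases hx : x i <;> simp [hx]
  · simp [hij]

lemma Flip_Flip {N : ℕ} (x : Fin N → Bool) (j : ℕ) : Flip (Flip x j) j = x := by
  funext i; simp only [Flip]; by_cases h : (i:ℕ) < j <;> simp [h]

lemma ivt (f : ℕ → ℤ) (hstep : ∀ k, |f (k+1) - f k| ≤ 1) {a b : ℕ} (hab : a ≤ b)
    {v : ℤ} (h1 : f a ≤ v) (h2 : v ≤ f b) : ∃ k, a ≤ k ∧ k ≤ b ∧ f k = v := by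
  induction b, hab using Nat.le_induction with
  | base => exact ⟨a, le_refl a, le_refl a, le_antisymm h1 h2⟩
  | succ b hab ih =>
    by_cases hv : v ≤ f b
    · obtain ⟨k, hk1, hk2, hk3⟩ := ih hv
      exact ⟨k, hk1, hk2.trans (Nat.le_succ b), hk3⟩
    · push_neg at hv
      have habs := abs_le.mp (hstep b)
      exact ⟨b+1, hab.trans (Nat.le_succ b), le_refl _, by omega⟩

lemma ivt' (f : ℕ → ℤ) (hstep : ∀ k, |f (k+1) - f k| ≤ 1) {a b : ℕ} (hab : a ≤ b)
    {v : ℤ} (h1 : v ≤ f a) (h2 : f b ≤ v) : ∃ k, a ≤ k ∧ k ≤ b ∧ f k = v := by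
  have hstep' : ∀ k, |(-f ·) (k+1) - (-f ·) k| ≤ 1 := by
    intro k; simp only; rw [neg_sub_neg, abs_sub_comm]; exact hstep k
  obtain ⟨k, hk1, hk2, hk3⟩ := ivt (-f ·) hstep' hab (neg_le_neg h1) (neg_le_neg h2)
  exact ⟨k, hk1, hk2, by omega⟩

lemma records_of_forbidden (f : ℕ → ℤ) (hstep : ∀ k, |f (k+1) - f k| ≤ 1) (j : ℕ)
    (h : ∀ j' < j, ¬(f j' = f j ∨ f j' = f j + 1)) : ∀ j' < j, f j' < f j := by
  intro j' hj'
  by_contra hge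
  push_neg at hge
  have h1 := h j' hj'
  obtain ⟨k, hk1, hk2, hk3⟩ := ivt' f hstep hj'.le (v := f j + 1) (by omega) (by omega)
  have hkj : k < j := by rcases eq_or_lt_of_le hk2 with rfl | hlt; · omega
                         · exact hlt
  exact h k hkj (Or.inr hk3)

lemma count_records (N : ℕ) (f : ℕ → ℤ) (h0 : f 0 = 0)
    (hstep : ∀ k, |f (k+1) - f k| ≤ 1) (M : ℤ)
    (hub : ∀ j ≤ N, f j ≤ M) (hM : ∃ j, j ≤ N ∧ f j = M) :
    Set.ncard {j | j ≤ N ∧ ∀ j' < j, f j' < f j} = M.toNat + 1 := by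
  classical
  have hM0 : 0 ≤ M := by have := hub 0 (Nat.zero_le N); omega
  set S := {j | j ≤ N ∧ ∀ j' < j, f j' < f j} with hS
  have hinj : Set.InjOn f S := by
    intro a ha b hb hfab
    by_contra hne
    rcases Nat.lt_or_ge a b with h | h
    · exact absurd hfab (ne_of_lt (hb.2 a h))
    · have hba : b < a := by omega
      exact absurd hfab.symm (ne_of_lt (ha.2 b hba))
  have himg : f '' S = Set.Icc 0 M := by
    ext v
    constructor
    · rintro ⟨j, hj, rfl⟩
      refine ⟨?_, hub j hj.1⟩
      rcases Nat.eq_zero_or_pos j with rfl | hj0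
      · omega
      · have := hj.2 0 hj0; omega
    · rintro ⟨hv0, hvM⟩
      obtain ⟨j0, hj0N, hj0⟩ := hM
      obtain ⟨k, -, hkj0, hfk⟩ := ivt f hstep (v := v) (Nat.zero_le j0) (by omega) (by omega)
      have hex : ∃ k, f k = v := ⟨k, hfk⟩
      have hfj : f (Nat.find hex) = v := Nat.find_spec hex
      have hjk : Nat.find hex ≤ k := Nat.find_min' hex hfk
      refine ⟨Nat.find hex, ⟨hjk.trans (hkj0.trans hj0N), ?_⟩, hfj⟩
      intro j' hj'
      have hne : f j' ≠ v := Nat.find_min hex hj'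
      rcases lt_or_gt_of_ne hne with h | h
      · omega
      · obtain ⟨k', -, hk'2, hfk'⟩ := ivt f hstep (v := v) (Nat.zero_le j') (by omega) h.le
        have := Nat.find_min' hex hfk'
        omega
  calc Set.ncard S = (f '' S).ncard := (Set.ncard_image_of_injOn hinj).symm
    _ = (Set.Icc 0 M).ncard := by rw [himg]
    _ = M.toNat + 1 := by
        rw [← Finset.coe_Icc, Set.ncard_coe_finset, Int.card_Icc]
        omega

lemma exists_max_on (N : ℕ) (f : ℕ → ℤ) :
    ∃ M : ℤ, (∀ j ≤ N, f j ≤ M) ∧ ∃ j, j ≤ N ∧ f j = M := by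
  obtain ⟨b, hb, hball⟩ := Finset.exists_max_image (Finset.range (N+1)) f ⟨0, by simp⟩
  refine ⟨f b, fun j hj => hball j (Finset.mem_range.mpr (by omega)), b, ?_, rfl⟩
  have := Finset.mem_range.mp hb; omega

/-- for `1 ≤ i ≤ n`, `|Γ_q^{(B)}(c)| = i` iff either
`wt c = m+q−1` and `max_{0≤j≤n−1} R(c)_j = i−1`, or `wt c = m+q` and
`min_{0≤j≤n−1} R(c)_j = −(i−1)`. -/
theorem stmt10 (m q : ℕ) (hq : q ≤ m) (i : ℕ) (hi1 : 1 ≤ i) (hi2 : i ≤ 2*m)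
    (c : Fin (2*m-1) → Bool) (hc : wt c = m + q - 1 ∨ wt c = m + q) :
    Set.ncard (GammaB m q c) = i ↔
    ((wt c = m + q - 1 ∧ (∀ j ≤ 2*m - 1, RS c j ≤ (i : ℤ) - 1) ∧
        (∃ j ≤ 2*m - 1, RS c j = (i : ℤ) - 1)) ∨
     (wt c = m + q ∧ (∀ j ≤ 2*m - 1, -((i : ℤ) - 1) ≤ RS c j) ∧
        (∃ j ≤ 2*m - 1, RS c j = -((i : ℤ) - 1)))) := by
  have hm : 1 ≤ m := by omega
  have key : ∀ j' j : ℕ, j' ≤ j →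
      (wt (Flip (Flip c j) j') : ℤ) = (wt c : ℤ) - RS c j + RS c j' := by
    intro j' j h
    rw [wt_Flip_int, wt_Flip_int, RS_Flip c h]; ring
  have hsteps : ∀ k, |RS c (k+1) - RS c k| ≤ 1 := by
    intro k
    rw [show RS c (k+1) = RS c k + (if h : k < 2*m-1 then (if c ⟨k,h⟩ then (1:ℤ) else -1) else 0)
        from rfl]
    split_ifs <;> simp
  rcases hc with hwc | hwc
  · -- case A : wt c = m + q - 1
    have hGA : GammaB m q c = {j | j ≤ 2*m-1 ∧ ∀ j' < j, RS c j' < RS c j} := by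
      ext j
      simp only [GammaB, TBmem, Set.mem_setOf_eq]
      constructor
      · rintro ⟨⟨hjN, -⟩, hmin⟩
        refine ⟨hjN, records_of_forbidden (RS c) hsteps j ?_⟩
        intro j' hj' hd
        have hkey := key j' j hj'.le
        have hj'N : j' ≤ 2*m-1 := le_trans hj'.le hjN
        have : j ≤ j' := hmin j' ⟨hj'N, by omega⟩
        omega
      · rintro ⟨hjN, hrec⟩
        refine ⟨⟨hjN, by rw [Flip_Flip]; omega⟩, ?_⟩
        rintro j' ⟨hj'N, hwt⟩
        by_contra hlt
        push_neg at hlt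
        have hkey := key j' j hlt.le
        have := hrec j' hlt
        omega
    rw [hGA]
    -- maximum
    obtain ⟨M, hub, hMmem⟩ := exists_max_on (2*m-1) (RS c)
    have hM0 : (0:ℤ) ≤ M := by
      have := hub 0 (Nat.zero_le _)
      have h0 : RS c 0 = 0 := rfl
      omega
    rw [count_records (2*m-1) (RS c) rfl hsteps M hub hMmem]
    constructor
    · intro h
      left
      refine ⟨hwc, fun j hj => by have := hub j hj; omega, ?_⟩
      obtain ⟨j, hj, hje⟩ := hMmem
      exact ⟨j, hj, by omega⟩
    · rintro (⟨-, hub', ⟨j, hj, hje⟩⟩ | ⟨hwc', -, -⟩)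
      · obtain ⟨j0, hj0, hje0⟩ := hMmem
        have h1 := hub' j0 hj0
        have h2 := hub j hj
        omega
      · omega
  · -- case B : wt c = m + q
    have hsteps' : ∀ k, |(fun k => -RS c k) (k+1) - (fun k => -RS c k) k| ≤ 1 := by
      intro k; simp only; rw [neg_sub_neg, abs_sub_comm]; exact hsteps k
    have hGB : GammaB m q c = {j | j ≤ 2*m-1 ∧ ∀ j' < j,
        (fun k => -RS c k) j' < (fun k => -RS c k) j} := by
      ext j
      simp only [GammaB, TBmem, Set.mem_setOf_eq]
      constructor
      · rintro ⟨⟨hjN, -⟩, hmin⟩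
        refine ⟨hjN, records_of_forbidden (fun k => -RS c k) hsteps' j ?_⟩
        intro j' hj' hd
        have hkey := key j' j hj'.le
        have hj'N : j' ≤ 2*m-1 := le_trans hj'.le hjN
        have : j ≤ j' := hmin j' ⟨hj'N, by omega⟩
        omega
      · rintro ⟨hjN, hrec⟩
        refine ⟨⟨hjN, by rw [Flip_Flip]; omega⟩, ?_⟩
        rintro j' ⟨hj'N, hwt⟩
        by_contra hlt
        push_neg at hlt
        have hkey := key j' j hlt.le
        have := hrec j' hlt
        omega
    rw [hGB]
    obtain ⟨M, hub, hMmem⟩ := exists_max_on (2*m-1) (fun k => -RS c k)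
    have hM0 : (0:ℤ) ≤ M := by
      have := hub 0 (Nat.zero_le _)
      have h0 : RS c 0 = 0 := rfl
      omega
    rw [count_records (2*m-1) (fun k => -RS c k) (by simp [show RS c 0 = 0 from rfl])
        hsteps' M (by simpa using hub) (by simpa using hMmem)]
    constructor
    · intro h
      right
      refine ⟨hwc, fun j hj => by have := hub j hj; omega, ?_⟩
      obtain ⟨j, hj, hje⟩ := hMmem
      exact ⟨j, hj, by omega⟩
    · rintro (⟨hwc', -, -⟩ | ⟨-, hub', ⟨j, hj, hje⟩⟩)
      · omega
      · obtain ⟨j0, hj0, hje0⟩ := hMmem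
        have h1 := hub' j0 hj0
        have h2 := hub j hj
        omega
end

section
/- Let n = 2m and let x ∈ {0,1}^{n−1}. If T_C(x) ≠ ∅, then min T_C(x) ≤ m − 1. -/
/-- `cyc x i` is the cyclic right shift of `x` by `i` positions. -/
def cyc {N : ℕ} (x : Fin N → Bool) (i : ℕ) : Fin N → Bool :=
  fun j => x ⟨((j : ℕ) + (N - i % N)) % N, Nat.mod_lt _ j.pos⟩

/-- `j ∈ T_C(x)`: `j ∈ {0,…,n−2}` and `wt(Flip_c(σ(x,j))) ∈ {m−1, m}`,
where `Flip_c` complements the first `m` bits. -/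
def TCmem (m : ℕ) (x : Fin (2*m-1) → Bool) (j : ℕ) : Prop :=
  j ≤ 2*m - 2 ∧ (wt (Flip (cyc x j) m) = m - 1 ∨ wt (Flip (cyc x j) m) = m)

/- ---------------- auxiliary material ---------------- -/

/-- number of ones of `x` in the length-`m` cyclic window determined by `j` -/
def Awin (m : ℕ) (x : Fin (2*m-1) → Bool) (j : ℕ) : ℕ :=
  (Finset.univ.filter
    (fun k : Fin (2*m-1) => x k = true ∧ ((k : ℕ) + j) % (2*m-1) < m)).card

lemma fin_add_cancel {N : ℕ} (j : ℕ) {a b : Fin N}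
    (h : ((a : ℕ) + j) % N = ((b : ℕ) + j) % N) : a = b := by
  have h2 : (a : ℕ) % N = (b : ℕ) % N := Nat.ModEq.add_right_cancel' j h
  rw [Nat.mod_eq_of_lt a.isLt, Nat.mod_eq_of_lt b.isLt] at h2
  exact Fin.ext h2

lemma mod_inv_add {N : ℕ} (hN : 0 < N) (b c : ℕ) (hb : b < N) :
    ((b + (N - c % N)) % N + c) % N = b := by
  rw [Nat.mod_add_mod]
  have hle : c % N ≤ c := Nat.mod_le c N
  have hlt : c % N < N := Nat.mod_lt c hN
  have hdm := Nat.div_add_mod c N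
  have h1 : b + (N - c % N) + c = b + N * (c / N + 1) := by
    have h2 : N * (c / N + 1) = N * (c / N) + N := by ring
    omega
  rw [h1, Nat.add_mul_mod_self_left, Nat.mod_eq_of_lt hb]

lemma card_shift {N : ℕ} (hN : 0 < N) (c : ℕ) (p : Fin N → Prop) [DecidablePred p] :
    (Finset.univ.filter fun i : Fin N => p ⟨((i : ℕ) + c) % N, Nat.mod_lt _ hN⟩).card
      = (Finset.univ.filter p).card := by
  refine Finset.card_bij (fun i _ => (⟨((i : ℕ) + c) % N, Nat.mod_lt _ hN⟩ : Fin N)) ?_ ?_ ?_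
  · intro a ha
    simp only [Finset.mem_filter, Finset.mem_univ, true_and] at ha ⊢
    exact ha
  · intro a _ b _ hab
    exact fin_add_cancel c (congrArg Fin.val hab)
  · intro b hb
    simp only [Finset.mem_filter, Finset.mem_univ, true_and] at hb
    refine ⟨⟨((b : ℕ) + (N - c % N)) % N, Nat.mod_lt _ hN⟩, ?_, ?_⟩
    · simp only [Finset.mem_filter, Finset.mem_univ, true_and]
      have : (⟨(((b : ℕ) + (N - c % N)) % N + c) % N, Nat.mod_lt _ hN⟩ : Fin N) = b :=
        Fin.ext (mod_inv_add hN b c b.isLt)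
      rw [this]
      exact hb
    · exact Fin.ext (mod_inv_add hN b c b.isLt)

lemma wt_cyc {m : ℕ} (hm : 0 < m) (x : Fin (2*m-1) → Bool) (j : ℕ) :
    wt (cyc x j) = wt x := by
  have hN : 0 < 2*m-1 := by omega
  exact card_shift hN (2*m-1 - j % (2*m-1)) (fun k => x k = true)

lemma Awin_eq {m : ℕ} (hm : 0 < m) (x : Fin (2*m-1) → Bool) (j : ℕ) :
    Awin m x j
      = (Finset.univ.filter fun i : Fin (2*m-1) =>
          (i : ℕ) < m ∧ cyc x j i = true).card := by
  have hN : 0 < 2*m-1 := by omega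
  rw [Awin, ← card_shift hN (2*m-1 - j % (2*m-1))
    (fun k : Fin (2*m-1) => x k = true ∧ ((k : ℕ) + j) % (2*m-1) < m)]
  apply congrArg Finset.card
  apply Finset.filter_congr
  intro i _
  have key : (((i : ℕ) + (2*m-1 - j % (2*m-1))) % (2*m-1) + j) % (2*m-1) = (i : ℕ) :=
    mod_inv_add hN (i : ℕ) j i.isLt
  simp only [key, cyc]
  constructor
  · rintro ⟨h1, h2⟩; exact ⟨h2, h1⟩
  · rintro ⟨h1, h2⟩; exact ⟨h2, h1⟩

lemma card_lt_s {N : ℕ} (s : ℕ) (hs : s ≤ N) :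
    (Finset.univ.filter fun i : Fin N => (i : ℕ) < s).card = s := by
  have : (Finset.univ.filter fun i : Fin N => (i : ℕ) < s)
      = Finset.map (Fin.castLEEmb hs) Finset.univ := by
    ext k
    simp only [Finset.mem_filter, Finset.mem_univ, true_and, Finset.mem_map,
      Fin.castLEEmb_apply]
    constructor
    · intro hk; exact ⟨⟨(k : ℕ), hk⟩, Fin.ext rfl⟩
    · rintro ⟨a, rfl⟩; exact a.isLt
  rw [this, Finset.card_map, Finset.card_univ, Fintype.card_fin]

lemma wt_flip_eq {N : ℕ} (y : Fin N → Bool) (s : ℕ) (hs : s ≤ N) :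
    wt (Flip y s)
      + 2 * (Finset.univ.filter fun i : Fin N => (i : ℕ) < s ∧ y i = true).card
      = s + wt y := by
  classical
  have key : ∀ z : Fin N → Bool,
      (Finset.univ.filter fun i => z i = true).card
        = (Finset.univ.filter fun i : Fin N => (i : ℕ) < s ∧ z i = true).card
          + (Finset.univ.filter fun i : Fin N => ¬ (i : ℕ) < s ∧ z i = true).card := by
    intro z
    rw [← Finset.card_filter_add_card_filter_not
      (s := Finset.univ.filter fun i : Fin N => z i = true)
      (p := fun i : Fin N => (i : ℕ) < s)]
    congr 1
    · rw [Finset.filter_filter]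
      apply congrArg Finset.card
      apply Finset.filter_congr; intro i _; constructor <;> (intro h; tauto)
    · rw [Finset.filter_filter]
      apply congrArg Finset.card
      apply Finset.filter_congr; intro i _; constructor <;> (intro h; tauto)
  have hsplit_s : (Finset.univ.filter fun i : Fin N => (i : ℕ) < s).card
      = (Finset.univ.filter fun i : Fin N => (i : ℕ) < s ∧ y i = true).card
        + (Finset.univ.filter fun i : Fin N => (i : ℕ) < s ∧ y i = false).card := by
    rw [← Finset.card_filter_add_card_filter_not
      (s := Finset.univ.filter fun i : Fin N => (i : ℕ) < s)
      (p := fun i : Fin N => y i = true)]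
    congr 1
    · rw [Finset.filter_filter]
    · rw [Finset.filter_filter]
      apply congrArg Finset.card
      apply Finset.filter_congr; intro i _; simp only [Bool.not_eq_true]
  have hflip1 : (Finset.univ.filter fun i : Fin N => (i : ℕ) < s ∧ Flip y s i = true).card
      = (Finset.univ.filter fun i : Fin N => (i : ℕ) < s ∧ y i = false).card := by
    apply congrArg Finset.card
    apply Finset.filter_congr; intro i _
    simp only [Flip]
    constructor
    · rintro ⟨h1, h2⟩; rw [if_pos h1] at h2; simp at h2; exact ⟨h1, h2⟩
    · rintro ⟨h1, h2⟩; rw [if_pos h1]; simp [h2, h1]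
  have hflip2 : (Finset.univ.filter fun i : Fin N => ¬ (i : ℕ) < s ∧ Flip y s i = true).card
      = (Finset.univ.filter fun i : Fin N => ¬ (i : ℕ) < s ∧ y i = true).card := by
    apply congrArg Finset.card
    apply Finset.filter_congr; intro i _
    simp only [Flip]
    constructor
    · rintro ⟨h1, h2⟩; rw [if_neg h1] at h2; exact ⟨h1, h2⟩
    · rintro ⟨h1, h2⟩; rw [if_neg h1]; exact ⟨h1, h2⟩
  have h1 := key (Flip y s)
  have h2 := key y
  have h3 := card_lt_s s hs
  rw [hflip1, hflip2] at h1
  unfold wt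
  omega

lemma card_res_le_one {N : ℕ} (j v : ℕ) :
    (Finset.univ.filter fun k : Fin N => ((k : ℕ) + j) % N = v).card ≤ 1 := by
  apply Finset.card_le_one.mpr
  intro a ha b hb
  simp only [Finset.mem_filter] at ha hb
  exact fin_add_cancel j (ha.2.trans hb.2.symm)

lemma Awin_step {m : ℕ} (hm : 0 < m) (x : Fin (2*m-1) → Bool) (j : ℕ) :
    Awin m x (j+1) ≤ Awin m x j + 1 ∧ Awin m x j ≤ Awin m x (j+1) + 1 := by
  have hN : 0 < 2*m-1 := by omega
  have hstep : ∀ k : Fin (2*m-1), ((k : ℕ) + (j+1)) % (2*m-1) = (((k : ℕ) + j) % (2*m-1) + 1) % (2*m-1) := by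
    intro k
    rw [Nat.mod_add_mod, Nat.add_assoc]
  constructor
  · have hsub : (Finset.univ.filter
        fun k : Fin (2*m-1) => x k = true ∧ ((k : ℕ) + (j+1)) % (2*m-1) < m)
        ⊆ (Finset.univ.filter fun k : Fin (2*m-1) => x k = true ∧ ((k : ℕ) + j) % (2*m-1) < m)
          ∪ (Finset.univ.filter fun k : Fin (2*m-1) => ((k : ℕ) + j) % (2*m-1) = (2*m-1) - 1) := by
      intro k hk
      simp only [Finset.mem_filter, Finset.mem_univ, true_and, Finset.mem_union] at hk ⊢
      obtain ⟨hx, hc⟩ := hk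
      rw [hstep k] at hc
      have hr : ((k : ℕ) + j) % (2*m-1) < (2*m-1) := Nat.mod_lt _ hN
      by_cases he : ((k : ℕ) + j) % (2*m-1) = (2*m-1) - 1
      · right; exact he
      · left
        have : (((k : ℕ) + j) % (2*m-1) + 1) % (2*m-1) = ((k : ℕ) + j) % (2*m-1) + 1 :=
          Nat.mod_eq_of_lt (by omega)
        rw [this] at hc
        exact ⟨hx, by omega⟩
    calc Awin m x (j+1) ≤ _ := Finset.card_le_card hsub
      _ ≤ _ + _ := Finset.card_union_le _ _
      _ ≤ Awin m x j + 1 := by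
          have := card_res_le_one (N := 2*m-1) j (2*m-1 - 1)
          unfold Awin
          omega
  · have hsub : (Finset.univ.filter
        fun k : Fin (2*m-1) => x k = true ∧ ((k : ℕ) + j) % (2*m-1) < m)
        ⊆ (Finset.univ.filter fun k : Fin (2*m-1) => x k = true ∧ ((k : ℕ) + (j+1)) % (2*m-1) < m)
          ∪ (Finset.univ.filter fun k : Fin (2*m-1) => ((k : ℕ) + j) % (2*m-1) = m - 1) := by
      intro k hk
      simp only [Finset.mem_filter, Finset.mem_univ, true_and, Finset.mem_union] at hk ⊢
      obtain ⟨hx, hc⟩ := hk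
      by_cases he : ((k : ℕ) + j) % (2*m-1) = m - 1
      · right; exact he
      · left
        refine ⟨hx, ?_⟩
        rw [hstep k]
        have : (((k : ℕ) + j) % (2*m-1) + 1) % (2*m-1) = ((k : ℕ) + j) % (2*m-1) + 1 :=
          Nat.mod_eq_of_lt (by omega)
        rw [this]
        omega
    calc Awin m x j ≤ _ := Finset.card_le_card hsub
      _ ≤ _ + _ := Finset.card_union_le _ _
      _ ≤ Awin m x (j+1) + 1 := by
          have := card_res_le_one (N := 2*m-1) j (m - 1)
          unfold Awin
          omega

lemma Awin_pair {m : ℕ} (hm : 0 < m) (x : Fin (2*m-1) → Bool) :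
    wt x ≤ Awin m x (m-1) + Awin m x 0 ∧ Awin m x (m-1) + Awin m x 0 ≤ wt x + 1 := by
  have hN : 0 < 2*m-1 := by omega
  have hchar : ∀ k : Fin (2*m-1),
      (((k : ℕ) + (m-1)) % (2*m-1) < m) ↔ ((k : ℕ) = 0 ∨ m ≤ (k : ℕ)) := by
    intro k
    have hk : (k : ℕ) < (2*m-1) := k.isLt
    by_cases hkm : (k : ℕ) < m
    · have : ((k : ℕ) + (m-1)) % (2*m-1) = (k : ℕ) + (m-1) := Nat.mod_eq_of_lt (by omega)
      rw [this]
      omega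
    · have h1 : ((k : ℕ) + (m-1)) % (2*m-1) = ((k : ℕ) + (m-1) - (2*m-1)) % (2*m-1) :=
        Nat.mod_eq_sub_mod (by omega)
      have h2 : ((k : ℕ) + (m-1) - (2*m-1)) % (2*m-1) = (k : ℕ) + (m-1) - (2*m-1) :=
        Nat.mod_eq_of_lt (by omega)
      rw [h1, h2]
      omega
    
  have hzero : ∀ k : Fin (2*m-1), (((k : ℕ) + 0) % (2*m-1) < m) ↔ (k : ℕ) < m := by
    intro k
    rw [Nat.add_zero, Nat.mod_eq_of_lt k.isLt]
  have hunion : (Finset.univ.filter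
        fun k : Fin (2*m-1) => x k = true ∧ ((k : ℕ) + (m-1)) % (2*m-1) < m)
      ∪ (Finset.univ.filter fun k : Fin (2*m-1) => x k = true ∧ ((k : ℕ) + 0) % (2*m-1) < m)
      = Finset.univ.filter fun k : Fin (2*m-1) => x k = true := by
    ext k
    simp only [Finset.mem_union, Finset.mem_filter, Finset.mem_univ, true_and,
      hchar k, hzero k]
    have hk : (k : ℕ) < (2*m-1) := k.isLt
    constructor
    · rintro (⟨h1, _⟩ | ⟨h1, _⟩) <;> exact h1
    · intro hx
      by_cases hkm : (k : ℕ) < m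
      · right; exact ⟨hx, hkm⟩
      · left; exact ⟨hx, Or.inr (by omega)⟩
  have hinter : ((Finset.univ.filter
        fun k : Fin (2*m-1) => x k = true ∧ ((k : ℕ) + (m-1)) % (2*m-1) < m)
      ∩ (Finset.univ.filter fun k : Fin (2*m-1) => x k = true ∧ ((k : ℕ) + 0) % (2*m-1) < m)).card
      ≤ 1 := by
    apply Finset.card_le_one.mpr
    intro a ha b hb
    simp only [Finset.mem_inter, Finset.mem_filter, Finset.mem_univ, true_and,
      hchar, hzero] at ha hb
    have ha0 : (a : ℕ) = 0 := by rcases ha.1.2 with h | h; exact h; exact absurd ha.2.2 (by omega)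
    have hb0 : (b : ℕ) = 0 := by rcases hb.1.2 with h | h; exact h; exact absurd hb.2.2 (by omega)
    exact Fin.ext (ha0.trans hb0.symm)
  have hcui := Finset.card_union_add_card_inter
    (Finset.univ.filter fun k : Fin (2*m-1) => x k = true ∧ ((k : ℕ) + (m-1)) % (2*m-1) < m)
    (Finset.univ.filter fun k : Fin (2*m-1) => x k = true ∧ ((k : ℕ) + 0) % (2*m-1) < m)
  rw [hunion] at hcui
  have hge : ((Finset.univ.filter
        fun k : Fin (2*m-1) => x k = true ∧ ((k : ℕ) + (m-1)) % (2*m-1) < m)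
      ∩ (Finset.univ.filter fun k : Fin (2*m-1) => x k = true ∧ ((k : ℕ) + 0) % (2*m-1) < m)).card
      ≥ 0 := Nat.zero_le _
  unfold Awin wt
  omega

lemma good_iff {m : ℕ} (hm : 0 < m) (x : Fin (2*m-1) → Bool) (j : ℕ) (hj : j ≤ 2*m-2) :
    TCmem m x j ↔ (2 * Awin m x j = wt x ∨ 2 * Awin m x j = wt x + 1) := by
  have hs : m ≤ 2*m-1 := by omega
  have hf := wt_flip_eq (cyc x j) m hs
  rw [← Awin_eq hm x j, wt_cyc hm x j] at hf
  unfold TCmem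
  omega

/-- if `T_C(x) ≠ ∅`, then `min T_C(x) ≤ m − 1`. -/
theorem stmt16 (m : ℕ) (x : Fin (2*m-1) → Bool)
    (h : {j | TCmem m x j}.Nonempty) :
    sInf {j | TCmem m x j} ≤ m - 1 := by
  obtain ⟨j1, hj1⟩ := h
  have hinf_le : sInf {j | TCmem m x j} ≤ j1 := Nat.sInf_le hj1
  by_contra hc
  push_neg at hc
  have hm : 0 < m := by
    rcases Nat.eq_zero_or_pos m with h0 | h0
    · exfalso; have := hj1.1; omega
    · exact h0
  have hnot : ∀ j, j ≤ m - 1 →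
      ¬ (2 * Awin m x j = wt x ∨ 2 * Awin m x j = wt x + 1) := by
    intro j hj hg
    have hjS : j ∉ {j | TCmem m x j} := Nat.notMem_of_lt_sInf (by omega)
    exact hjS ((good_iff hm x j (by omega)).mpr hg)
  have h0 := hnot 0 (by omega)
  rcases Nat.lt_or_ge (2 * Awin m x 0) (wt x) with hlow | hhigh
  · have claim : ∀ j, j ≤ m - 1 → 2 * Awin m x j < wt x := by
      intro j
      induction j with
      | zero => intro _; exact hlow
      | succ n ih =>
        intro hn
        have h1 := ih (by omega)
        have h2 := (Awin_step hm x n).1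
        have h3 := hnot (n+1) hn
        omega
    have hA := claim (m-1) le_rfl
    have hp := (Awin_pair hm x).1
    have h3 := hnot (m-1) le_rfl
    omega
  · have hhigh2 : 2 * Awin m x 0 > wt x + 1 := by omega
    have claim : ∀ j, j ≤ m - 1 → 2 * Awin m x j > wt x + 1 := by
      intro j
      induction j with
      | zero => intro _; exact hhigh2
      | succ n ih =>
        intro hn
        have h1 := ih (by omega)
        have h2 := (Awin_step hm x n).2
        have h3 := hnot (n+1) hn
        omega
    have hA := claim (m-1) le_rfl
    have hp := (Awin_pair hm x).2
    omega
end

section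
/- Define, for each integer m ≥ 1, ρ_m = 1 + 2^{−(2m−1)} · Σ_{i=1}^{m} 2 · C(2i−2, i−1) · C(2m−2i, m−i) · log₂ i, where C(a,b) denotes the binomial coefficient. Then ρ_m / log₂(2m) → 1 as m → ∞; that is, the average redundancy of Scheme C with C = {0,1}^{2m−1} is asymptotically log₂ n for n = 2m. -/
open Finset Nat Real Filter

lemma perterm (n k : ℕ) (hk : k ≤ n) :
    (n+1) * (centralBinom k * centralBinom (n+1-k)) + (k+1) * (centralBinom (k+1) * centralBinom (n-k))
    = 4*(n+1) * (centralBinom k * centralBinom (n-k)) + k * (centralBinom k * centralBinom (n+1-k)) := by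
  obtain ⟨j, hj⟩ : ∃ j, n - k = j := ⟨n - k, rfl⟩
  have h1 : n + 1 - k = j + 1 := by omega
  have h2 : n = j + k := by omega
  have r1 := Nat.succ_mul_centralBinom_succ k
  have r2 := Nat.succ_mul_centralBinom_succ j
  rw [hj, h1]
  zify at r1 r2 ⊢
  have h2' : (n : ℤ) = j + k := by exact_mod_cast h2
  rw [h2']
  linear_combination (centralBinom k : ℤ) * r2 + (centralBinom j : ℤ) * r1

lemma cb_conv : ∀ n : ℕ, ∑ k ∈ range (n+1), centralBinom k * centralBinom (n-k) = 4^n := by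
  intro n
  induction n with
  | zero => simp [Nat.centralBinom]
  | succ n ih =>
    set a := Nat.centralBinom with ha
    have key : ∀ k ∈ range (n+1),
        (n+1) * (a k * a (n+1-k)) + (k+1) * (a (k+1) * a (n-k))
        = 4*(n+1) * (a k * a (n-k)) + k * (a k * a (n+1-k)) := by
      intro k hk
      exact perterm n k (by simp at hk; omega)
    have hsum := Finset.sum_congr rfl key
    rw [Finset.sum_add_distrib, Finset.sum_add_distrib] at hsum
    set U := ∑ k ∈ range (n+1), a k * a (n+1-k) with hU
    set V := ∑ k ∈ range (n+1), k * (a k * a (n+1-k)) with hV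
    set S := ∑ k ∈ range (n+2), k * (a k * a (n+1-k)) with hS
    have e1 : ∑ k ∈ range (n+1), (n+1) * (a k * a (n+1-k)) = (n+1) * U := by
      rw [hU, Finset.mul_sum]
    have e2 : ∑ k ∈ range (n+1), 4*(n+1) * (a k * a (n-k)) = 4*(n+1) * 4^n := by
      rw [← ih, Finset.mul_sum]
    have e3 : ∑ k ∈ range (n+1), (k+1) * (a (k+1) * a (n-k)) = S := by
      rw [hS, Finset.sum_range_succ' (fun k => k * (a k * a (n+1-k)))]
      simp
    have e4 : S = V + (n+1) * (a (n+1) * a 0) := by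
      rw [hS, hV, Finset.sum_range_succ, Nat.sub_self]
    rw [e1, e2, e3, e4] at hsum
    have h5 : (n+1) * (U + a (n+1) * a 0) = (n+1) * (4 * 4^n) := by
      have : (n+1) * U + (n+1) * (a (n+1) * a 0) = 4*(n+1) * 4^n := by omega
      ring_nf
      ring_nf at this
      omega
    have h6 := Nat.eq_of_mul_eq_mul_left (Nat.succ_pos n) h5
    rw [Finset.sum_range_succ]
    have : n + 1 - (n+1) = 0 := by omega
    rw [this]
    rw [hU] at h6
    omega

lemma cbsq (k : ℕ) : (centralBinom k)^2 * (2*k+1) ≤ 16^k := by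
  induction k with
  | zero => simp [Nat.centralBinom]
  | succ k ih =>
    have r := Nat.succ_mul_centralBinom_succ k
    have h : ((k+1) * centralBinom (k+1))^2 * (2*(k+1)+1) = (2*(2*k+1)*centralBinom k)^2 * (2*k+3) := by
      rw [r]; ring_nf
    have ih2 : 4*(2*k+1)*(2*k+3) * ((centralBinom k)^2*(2*k+1)) ≤ 4*(2*k+1)*(2*k+3) * 16^k :=
      Nat.mul_le_mul_left _ ih
    have ih3 : (4*(2*k+1)*(2*k+3)) * 16^k ≤ (16*(k+1)^2) * 16^k :=
      Nat.mul_le_mul_right _ (by nlinarith)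
    have key : (k+1)^2 * ((centralBinom (k+1))^2 * (2*(k+1)+1)) ≤ (k+1)^2 * 16^(k+1) := by
      calc (k+1)^2 * ((centralBinom (k+1))^2 * (2*(k+1)+1))
          = ((k+1) * centralBinom (k+1))^2 * (2*(k+1)+1) := by ring
        _ = (2*(2*k+1)*centralBinom k)^2 * (2*k+3) := h
        _ = 4*(2*k+1)*(2*k+3) * ((centralBinom k)^2*(2*k+1)) := by ring
        _ ≤ 4*(2*k+1)*(2*k+3) * 16^k := ih2
        _ ≤ 16*(k+1)^2 * 16^k := ih3
        _ = (k+1)^2 * 16^(k+1) := by rw [pow_succ]; ring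
    exact Nat.le_of_mul_le_mul_left key (by positivity)

noncomputable def q (k : ℕ) : ℝ := (Nat.centralBinom k : ℝ) / 4^k

lemma q_pos (k : ℕ) : 0 < q k :=
  div_pos (by exact_mod_cast Nat.centralBinom_pos k) (by positivity)

lemma q_le (k : ℕ) : q k ≤ 1 / Real.sqrt (2*k+1) := by
  have h : (q k)^2 ≤ 1 / (2*(k:ℝ)+1) := by
    rw [q, div_pow, div_le_div_iff₀ (by positivity) (by positivity), one_mul,
      show ((4:ℝ)^k)^2 = 16^k by rw [show (16:ℝ) = 4^2 by norm_num, ← pow_mul, ← pow_mul, Nat.mul_comm]]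
    exact_mod_cast cbsq k
  calc q k = Real.sqrt ((q k)^2) := (Real.sqrt_sq (q_pos k).le).symm
  _ ≤ Real.sqrt (1/(2*(k:ℝ)+1)) := Real.sqrt_le_sqrt h
  _ = 1 / Real.sqrt (2*(k:ℝ)+1) := by rw [one_div, one_div, Real.sqrt_inv]

lemma sqrt_sum (n : ℕ) : ∑ i ∈ Finset.Icc 1 n, 1 / Real.sqrt i ≤ 2 * Real.sqrt n := by
  induction n with
  | zero => simp
  | succ n ih =>
    rw [show Finset.Icc 1 (n+1) = insert (n+1) (Finset.Icc 1 n) by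
      ext x; simp [Finset.mem_Icc, Finset.mem_insert]; omega,
      Finset.sum_insert (by simp)]
    push_cast
    have hs : Real.sqrt n ^ 2 = n := Real.sq_sqrt (by positivity)
    have ht : Real.sqrt ((n:ℝ)+1) ^ 2 = (n:ℝ)+1 := Real.sq_sqrt (by positivity)
    have ht0 : (0:ℝ) < Real.sqrt ((n:ℝ)+1) := Real.sqrt_pos.mpr (by positivity)
    have hs0 : (0:ℝ) ≤ Real.sqrt n := Real.sqrt_nonneg _
    have h2st : 2 * Real.sqrt n * Real.sqrt ((n:ℝ)+1) ≤ 2*(n:ℝ)+1 := by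
      nlinarith [sq_nonneg (Real.sqrt n * Real.sqrt ((n:ℝ)+1) - n)]
    have key : 1 / Real.sqrt ((n:ℝ)+1) ≤ 2 * Real.sqrt ((n:ℝ)+1) - 2 * Real.sqrt n := by
      rw [div_le_iff₀ ht0]
      nlinarith
    linarith

lemma P_sum {m : ℕ} (hm : 1 ≤ m) : ∑ i ∈ Finset.Icc 1 m, q (i-1) * q (m-i) = 1 := by
  have hterm : ∀ i ∈ Finset.Icc 1 m, q (i-1) * q (m-i)
      = ((Nat.centralBinom (i-1) * Nat.centralBinom (m-i) : ℕ) : ℝ) / (4:ℝ)^(m-1) := by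
    intro i hi
    simp only [Finset.mem_Icc] at hi
    unfold q
    push_cast
    rw [_root_.div_mul_div_comm, ← pow_add, show (i-1)+(m-i) = m-1 by omega]
  rw [Finset.sum_congr rfl hterm, ← Finset.sum_div, ← Nat.cast_sum]
  have hnat : ∑ i ∈ Finset.Icc 1 m, Nat.centralBinom (i-1) * Nat.centralBinom (m-i) = 4^(m-1) := by
    rw [← Finset.Ico_add_one_right_eq_Icc, Finset.sum_Ico_eq_sum_range]
    obtain ⟨n, rfl⟩ : ∃ n, m = n + 1 := ⟨m - 1, by omega⟩
    calc ∑ k ∈ range (n+1), Nat.centralBinom (1+k-1) * Nat.centralBinom (n+1-(1+k))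
        = ∑ k ∈ range (n+1), Nat.centralBinom k * Nat.centralBinom (n-k) := by
          apply Finset.sum_congr rfl; intro k hk; congr 1 <;> [congr 1; congr 1] <;> omega
      _ = 4^n := cb_conv n
      _ = 4^(n+1-1) := by norm_num
  rw [hnat]
  rw [Nat.cast_pow]
  norm_num

noncomputable def g (x : ℝ) : ℝ := (1 + (x - 2*Real.logb 2 x)*(1 - 2/x))/(1+x)

lemma hlogb_div : Tendsto (fun x : ℝ => Real.logb 2 x / x) atTop (nhds 0) := by
  have h := Real.isLittleO_log_id_atTop.tendsto_div_nhds_zero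
  have h2 := h.div_const (Real.log 2)
  simp only [zero_div] at h2
  apply h2.congr
  intro x
  simp [Real.logb, div_div, id]
  ring

lemma g_tendsto : Tendsto g atTop (nhds 1) := by
  have hinv : Tendsto (fun x:ℝ => 1/x) atTop (nhds 0) := by
    simpa using tendsto_inv_atTop_zero
  have hnum : Tendsto (fun x:ℝ => 1/x + (1 - 2*(Real.logb 2 x/x))*(1-2*(1/x)))
      atTop (nhds (0 + (1 - 2*0)*(1-2*0))) :=
    (hinv.add (((tendsto_const_nhds.sub (hlogb_div.const_mul 2))).mul
      (tendsto_const_nhds.sub (hinv.const_mul 2))))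
  have hden : Tendsto (fun x:ℝ => 1/x + 1) atTop (nhds (0 + 1)) := hinv.add tendsto_const_nhds
  have hq := hnum.div hden (by norm_num)
  norm_num at hq
  apply hq.congr'
  filter_upwards [eventually_ge_atTop (1:ℝ)] with x hx
  have hx0 : 0 < x := by linarith
  unfold g
  simp only [Pi.div_apply]
  rw [div_eq_div_iff (by positivity) (by positivity)]
  field_simp

lemma xlog_tendsto : Tendsto (fun m : ℕ => Real.logb 2 (m:ℝ)) atTop atTop :=
  (Real.tendsto_logb_atTop (by norm_num : (1:ℝ) < 2)).comp tendsto_natCast_atTop_atTop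

lemma r_tendsto : Tendsto (fun m : ℕ => (m:ℝ) / (Real.logb 2 m)^2) atTop atTop := by
  have h1 : Tendsto (fun x:ℝ => (Real.log x)^2/x) atTop (nhds 0) := by
    simpa using Real.tendsto_pow_log_div_mul_add_atTop 1 0 2 one_ne_zero
  have h2 : ∀ᶠ x:ℝ in atTop, (Real.log x)^2/x ∈ Set.Ioi (0:ℝ) := by
    filter_upwards [eventually_ge_atTop (2:ℝ)] with x hx
    have : 0 < Real.log x := Real.log_pos (by linarith)
    have : 0 < x := by linarith
    exact Set.mem_Ioi.mpr (by positivity)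
  have h3 : Tendsto (fun x:ℝ => (Real.log x)^2/x) atTop (nhdsWithin 0 (Set.Ioi 0)) :=
    tendsto_nhdsWithin_of_tendsto_nhds_of_eventually_within _ h1 h2
  have h4 : Tendsto (fun x:ℝ => ((Real.log x)^2/x)⁻¹) atTop atTop := h3.inv_tendsto_nhdsGT_zero
  have h5 : Tendsto (fun x:ℝ => x/(Real.log x)^2 * (Real.log 2)^2) atTop atTop := by
    apply Tendsto.atTop_mul_const (by positivity : (0:ℝ) < (Real.log 2)^2)
    apply h4.congr
    intro x
    rw [inv_div]
  have h6 : Tendsto (fun x:ℝ => x/(Real.logb 2 x)^2) atTop atTop := by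
    apply h5.congr'
    filter_upwards [eventually_ge_atTop (2:ℝ)] with x hx
    have hl : Real.log x ≠ 0 := ne_of_gt (Real.log_pos (by linarith))
    have hl2 : Real.log 2 ≠ 0 := ne_of_gt (Real.log_pos (by norm_num))
    rw [Real.logb, div_pow]
    field_simp
  exact h6.comp tendsto_natCast_atTop_atTop

noncomputable def A (m : ℕ) : ℝ := ∑ i ∈ Finset.Icc 1 m, q (i-1) * q (m-i) * Real.logb 2 i

lemma one_lt_two' : (1:ℝ) < 2 := by norm_num

lemma upperA {m : ℕ} (hm : 1 ≤ m) : A m ≤ Real.logb 2 m := by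
  have h : A m ≤ ∑ i ∈ Finset.Icc 1 m, q (i-1) * q (m-i) * Real.logb 2 m := by
    apply Finset.sum_le_sum
    intro i hi
    simp only [Finset.mem_Icc] at hi
    apply mul_le_mul_of_nonneg_left _ (mul_nonneg (q_pos _).le (q_pos _).le)
    exact Real.logb_le_logb_of_le one_lt_two' (by exact_mod_cast hi.1) (by exact_mod_cast hi.2)
  rwa [← Finset.sum_mul, P_sum hm, one_mul] at h

lemma lowerA {m : ℕ} {x r : ℝ} (hx : x = Real.logb 2 m) (hr : r = (m:ℝ)/x^2)
    (h1 : 8 ≤ x) (h2 : 2 ≤ r) :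
    Real.logb 2 r * (1 - 2/x) ≤ A m := by
  have hx0 : (0:ℝ) < x := by linarith
  have hm0 : 1 ≤ m := by
    by_contra h
    push_neg at h
    have h0 : m = 0 := by omega
    rw [h0] at hx
    norm_num [Real.logb] at hx
    linarith
  have hm1 : (1:ℝ) ≤ m := by exact_mod_cast hm0
  have hyx : r * x^2 = m := by rw [hr]; field_simp
  have hrm : 2*r ≤ m := by nlinarith [mul_nonneg (by linarith : (0:ℝ) ≤ r) (by nlinarith : (0:ℝ) ≤ x^2 - 2)]
  have hr0 : (0:ℝ) < r := by linarith
  set t := (Finset.Icc 1 m).filter (fun i : ℕ => r < (i:ℝ)) with ht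
  set tc := (Finset.Icc 1 m).filter (fun i : ℕ => ¬ r < (i:ℝ)) with htc
  -- tail bound
  have htail : ∑ i ∈ tc, q (i-1) * q (m-i) ≤ 2/x := by
    have hb : ∀ i ∈ tc, q (i-1) * q (m-i) ≤ (1/Real.sqrt i) * (1/Real.sqrt m) := by
      intro i hi
      rw [htc, Finset.mem_filter, Finset.mem_Icc] at hi
      obtain ⟨⟨hi1, him⟩, hir⟩ := hi
      push_neg at hir
      have hi1' : (1:ℝ) ≤ i := by exact_mod_cast hi1
      have h2i : 2 * (i:ℝ) ≤ m := by linarith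
      have hq1 : q (i-1) ≤ 1/Real.sqrt i := by
        refine (q_le (i-1)).trans ?_
        apply one_div_le_one_div_of_le (Real.sqrt_pos.mpr (by linarith))
        apply Real.sqrt_le_sqrt
        rw [Nat.cast_sub hi1]
        push_cast
        linarith
      have hq2 : q (m-i) ≤ 1/Real.sqrt m := by
        refine (q_le (m-i)).trans ?_
        apply one_div_le_one_div_of_le (Real.sqrt_pos.mpr (by linarith))
        apply Real.sqrt_le_sqrt
        rw [Nat.cast_sub him]
        push_cast
        linarith
      exact mul_le_mul hq1 hq2 (q_pos _).le (by positivity)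
    have hstep : ∑ i ∈ tc, q (i-1) * q (m-i) ≤ ∑ i ∈ tc, (1/Real.sqrt i) * (1/Real.sqrt m) :=
      Finset.sum_le_sum hb
    have hsub : tc ⊆ Finset.Icc 1 (Nat.floor r) := by
      intro i hi
      rw [htc, Finset.mem_filter, Finset.mem_Icc] at hi
      obtain ⟨⟨hi1, him⟩, hir⟩ := hi
      push_neg at hir
      exact Finset.mem_Icc.mpr ⟨hi1, Nat.le_floor hir⟩
    have hstep2 : ∑ i ∈ tc, (1/Real.sqrt i) ≤ ∑ i ∈ Finset.Icc 1 (Nat.floor r), (1/Real.sqrt i) :=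
      Finset.sum_le_sum_of_subset_of_nonneg hsub (fun i _ _ => by positivity)
    have hstep3 : ∑ i ∈ Finset.Icc 1 (Nat.floor r), (1/Real.sqrt i) ≤ 2 * Real.sqrt r :=
      (sqrt_sum _).trans (by
        apply mul_le_mul_of_nonneg_left _ (by norm_num)
        exact Real.sqrt_le_sqrt (Nat.floor_le hr0.le))
    have hsm : Real.sqrt r * x = Real.sqrt m := by
      rw [← hyx, Real.sqrt_mul hr0.le, Real.sqrt_sq hx0.le]
    have hfin : (2 * Real.sqrt r) * (1/Real.sqrt m) = 2/x := by
      rw [← hsm]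
      have hsr : (0:ℝ) < Real.sqrt r := Real.sqrt_pos.mpr hr0
      field_simp
    calc ∑ i ∈ tc, q (i-1) * q (m-i)
        ≤ ∑ i ∈ tc, (1/Real.sqrt i) * (1/Real.sqrt m) := hstep
      _ = (∑ i ∈ tc, (1/Real.sqrt i)) * (1/Real.sqrt m) := by rw [Finset.sum_mul]
      _ ≤ (2 * Real.sqrt r) * (1/Real.sqrt m) := by
          apply mul_le_mul_of_nonneg_right (hstep2.trans hstep3) (by positivity)
      _ = 2/x := hfin
  -- mass of t
  have hsplit : (∑ i ∈ t, q (i-1) * q (m-i)) + (∑ i ∈ tc, q (i-1) * q (m-i)) = 1 := by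
    rw [ht, htc, Finset.sum_filter_add_sum_filter_not]
    exact P_sum hm0
  have ht1 : 1 - 2/x ≤ ∑ i ∈ t, q (i-1) * q (m-i) := by linarith
  -- lower bound on A
  have hA : A m = (∑ i ∈ t, q (i-1) * q (m-i) * Real.logb 2 i)
      + (∑ i ∈ tc, q (i-1) * q (m-i) * Real.logb 2 i) := by
    rw [A, ht, htc, Finset.sum_filter_add_sum_filter_not]
  have hnn : 0 ≤ ∑ i ∈ tc, q (i-1) * q (m-i) * Real.logb 2 i := by
    apply Finset.sum_nonneg
    intro i hi
    rw [htc, Finset.mem_filter, Finset.mem_Icc] at hi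
    have : (1:ℝ) ≤ i := by exact_mod_cast hi.1.1
    exact mul_nonneg (mul_nonneg (q_pos _).le (q_pos _).le) (Real.logb_nonneg one_lt_two' this)
  have hterm : ∀ i ∈ t, q (i-1) * q (m-i) * Real.logb 2 r ≤ q (i-1) * q (m-i) * Real.logb 2 i := by
    intro i hi
    rw [ht, Finset.mem_filter] at hi
    apply mul_le_mul_of_nonneg_left _ (mul_nonneg (q_pos _).le (q_pos _).le)
    exact Real.logb_le_logb_of_le one_lt_two' hr0 hi.2.le
  have hlogr : 0 ≤ Real.logb 2 r := Real.logb_nonneg one_lt_two' (by linarith)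
  calc Real.logb 2 r * (1 - 2/x)
      ≤ Real.logb 2 r * (∑ i ∈ t, q (i-1) * q (m-i)) := mul_le_mul_of_nonneg_left ht1 hlogr
    _ = ∑ i ∈ t, q (i-1) * q (m-i) * Real.logb 2 r := by rw [Finset.mul_sum]; apply Finset.sum_congr rfl; intros; ring
    _ ≤ ∑ i ∈ t, q (i-1) * q (m-i) * Real.logb 2 i := Finset.sum_le_sum hterm
    _ ≤ A m := by rw [hA]; linarith

/-- the average redundancy
`ρ_m = 1 + 2^{−(2m−1)} Σ_{i=1}^{m} 2·C(2i−2,i−1)·C(2m−2i,m−i)·log₂ i`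
of Scheme C with `C = {0,1}^{2m−1}` satisfies `ρ_m / log₂(2m) → 1`. -/
theorem stmt19 :
    Filter.Tendsto (fun m : ℕ =>
      (1 + (∑ i ∈ Finset.Icc 1 m,
          2 * (Nat.choose (2*i-2) (i-1) : ℝ) * (Nat.choose (2*m-2*i) (m-i))
            * Real.logb 2 i) / 2^(2*m-1))
        / Real.logb 2 (2*m)) Filter.atTop (nhds 1) := by
  set F := fun m : ℕ =>
      (1 + (∑ i ∈ Finset.Icc 1 m,
          2 * (Nat.choose (2*i-2) (i-1) : ℝ) * (Nat.choose (2*m-2*i) (m-i))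
            * Real.logb 2 i) / 2^(2*m-1))
        / Real.logb 2 (2*m) with hF
  have hFA : ∀ m : ℕ, 1 ≤ m → F m = (1 + A m) / (1 + Real.logb 2 m) := by
    intro m hm
    have hm0 : ((m:ℝ)) ≠ 0 := by
      have : (1:ℝ) ≤ m := by exact_mod_cast hm
      linarith
    have hnum : (∑ i ∈ Finset.Icc 1 m,
        2 * (Nat.choose (2*i-2) (i-1) : ℝ) * (Nat.choose (2*m-2*i) (m-i))
          * Real.logb 2 i) / 2^(2*m-1) = A m := by
      rw [Finset.sum_div, A]
      apply Finset.sum_congr rfl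
      intro i hi
      simp only [Finset.mem_Icc] at hi
      have e1 : Nat.choose (2*i-2) (i-1) = Nat.centralBinom (i-1) := by
        rw [Nat.centralBinom]; congr 1; omega
      have e2 : Nat.choose (2*m-2*i) (m-i) = Nat.centralBinom (m-i) := by
        rw [Nat.centralBinom]; congr 1; omega
      rw [e1, e2]
      unfold q
      have hp : (2:ℝ)^(2*m-1) = 2 * 4^(m-1) := by
        rw [show 2*m-1 = 2*(m-1)+1 by omega, pow_succ, pow_mul]
        norm_num
        ring
      have hpow : (4:ℝ)^(i-1) * 4^(m-i) = 4^(m-1) := by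
        rw [← pow_add]; congr 1; omega
      rw [hp, ← hpow]
      have h1 : (0:ℝ) < 4^(i-1) := by positivity
      have h2 : (0:ℝ) < 4^(m-i) := by positivity
      field_simp
    have hden : Real.logb 2 (2*(m:ℝ)) = 1 + Real.logb 2 m := by
      rw [Real.logb_mul two_ne_zero hm0, Real.logb_self_eq_one one_lt_two']
    rw [hF]
    simp only
    rw [hnum, hden]
  have hup : ∀ᶠ m : ℕ in atTop, F m ≤ 1 := by
    filter_upwards [eventually_ge_atTop 1] with m hm
    rw [hFA m hm]
    have hx0 : 0 ≤ Real.logb 2 (m:ℝ) :=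
      Real.logb_nonneg one_lt_two' (by exact_mod_cast hm)
    rw [div_le_one (by linarith)]
    linarith [upperA hm]
  have hlo : ∀ᶠ m : ℕ in atTop, g (Real.logb 2 (m:ℝ)) ≤ F m := by
    filter_upwards [eventually_ge_atTop 1, xlog_tendsto.eventually_ge_atTop 8,
      r_tendsto.eventually_ge_atTop 2] with m hm h8 hr2
    set x := Real.logb 2 (m:ℝ) with hxdef
    have hx0 : (0:ℝ) < x := by linarith
    have hm0 : ((m:ℝ)) ≠ 0 := by
      have : (1:ℝ) ≤ m := by exact_mod_cast hm
      linarith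
    have hlow := lowerA hxdef rfl h8 hr2
    have hlogr : Real.logb 2 ((m:ℝ)/x^2) = x - 2 * Real.logb 2 x := by
      rw [Real.logb_div hm0 (by positivity), Real.logb_pow]
      push_cast
      ring
    rw [hlogr] at hlow
    rw [hFA m hm]
    calc g x ≤ (1 + A m)/(1+x) := by
          rw [g, div_le_div_iff₀ (by linarith) (by linarith)]
          nlinarith [hlow, hx0]
      _ = (1 + A m)/(1 + Real.logb 2 (m:ℝ)) := rfl
  have hg : Filter.Tendsto (fun m : ℕ => g (Real.logb 2 (m:ℝ))) atTop (nhds 1) :=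
    g_tendsto.comp xlog_tendsto
  exact tendsto_of_tendsto_of_tendsto_of_le_of_le' hg tendsto_const_nhds hlo hup
end
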